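/- Let N > 1 and let {a_j}_{j∈ℕ} be a discrete sequence without repetitions in ℂ^N that is contained in a proper affine complex subspace of ℂ^N (i.e. in a set of the form v + W where W is a complex linear subspace of ℂ^N with W ≠ ℂ^N). Then {a_j}_{j∈ℕ} is tame in ℂ^N. -/

import Mathlib

open Metric Set

/-- A holomorphic automorphism of ℂ^N: a bijection that is holomorphic with
holomorphic inverse. -/
def IsAutomorphism {N : ℕ} (Φ : (Fin N → ℂ) → (Fin N → ℂ)) : Prop :=
  Differentiable ℂ Φ ∧ ∃ Ψ : (Fin N → ℂ) → (Fin N → ℂ),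
    Differentiable ℂ Ψ ∧ (∀ z, Ψ (Φ z) = z) ∧ (∀ w, Φ (Ψ w) = w)

/-- A discrete sequence without repetitions in ℂ^N. -/
def DiscreteSeq {N : ℕ} (a : ℕ → (Fin N → ℂ)) : Prop :=
  Function.Injective a ∧
  ∀ K : Set (Fin N → ℂ), IsCompact K → {j : ℕ | a j ∈ K}.Finite

/-- A sequence in ℂ^N is tame if some holomorphic automorphism sends `a j`
to `e j = (j, 0, …, 0)` for every `j`. -/
def Tame {N : ℕ} (a : ℕ → (Fin N → ℂ)) : Prop :=
  ∃ Φ : (Fin N → ℂ) → (Fin N → ℂ), IsAutomorphism Φ ∧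
    ∀ j : ℕ, Φ (a j) = fun i : Fin N => if (i : ℕ) = 0 then (j : ℂ) else 0

/-- A closed complex subvariety of ℂ^N: locally the common zero set of a family
of holomorphic functions. -/
def IsClosedSubvariety {N : ℕ} (X : Set (Fin N → ℂ)) : Prop :=
  IsClosed X ∧ ∀ p : Fin N → ℂ, ∃ U : Set (Fin N → ℂ), IsOpen U ∧ p ∈ U ∧
    ∃ F : Set ((Fin N → ℂ) → ℂ), (∀ f ∈ F, DifferentiableOn ℂ f U) ∧
      X ∩ U = {z ∈ U | ∀ f ∈ F, f z = 0}

/-- Polynomial convexity: `K` equals its polynomial hull. -/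
def PolyConvex {N : ℕ} (K : Set (Fin N → ℂ)) : Prop :=
  K = {z : Fin N → ℂ | ∀ p : MvPolynomial (Fin N) ℂ,
    ‖MvPolynomial.eval z p‖ ≤ ⨆ w ∈ K, ‖MvPolynomial.eval w p‖}

/-- `Φ` is a biholomorphic map from the open set `Ω` onto all of ℂ^N. -/
def BiholoOnto {N : ℕ} (Ω : Set (Fin N → ℂ)) (Φ : (Fin N → ℂ) → (Fin N → ℂ)) : Prop :=
  DifferentiableOn ℂ Φ Ω ∧ ∃ Ψ : (Fin N → ℂ) → (Fin N → ℂ),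
    Differentiable ℂ Ψ ∧ (∀ z ∈ Ω, Ψ (Φ z) = z) ∧ (∀ w, Ψ w ∈ Ω ∧ Φ (Ψ w) = w)

/-!
Choose a coordinate vector `e = Pi.single i₀ 1` outside `W`. The projection `π z = z - z i₀ • e`
is injective on `v + W`, hence anti-Lipschitz there, so `b j = π (a j)` is again injective and
tends to infinity. For such sequences, entire functions with prescribed values exist: sum a
Newton-type series whose `n`-th term vanishes at `b 0, …, b (n-1)` and is damped by a high power
of a linear function so as to be at most `2⁻ⁿ` on the ball of radius `‖b n‖ / 2`. With `f` such
that `f (b j) = j - a j i₀` and `g : ℂ → ℂ^N` such that `g j = b j`, the shear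
`z ↦ z + f (π z) • e` sends `a j` to `b j + j • e`, the shear `z ↦ z - π (g (z i₀))` sends this
to `j • e`, and swapping the coordinates `i₀` and `0` finishes.
-/

open Filter

section Interpolation

variable {E F : Type*} [NormedAddCommGroup E] [NormedSpace ℂ E]
  [NormedAddCommGroup F] [NormedSpace ℂ F]

theorem exists_differentiable_eq_one_of_notMem (s : Finset E) {x : E} (hx : x ∉ s) :
    ∃ P : E → ℂ, Differentiable ℂ P ∧ P x = 1 ∧ (∀ y ∈ s, P y = 0) ∧
      ∀ z, ‖P z‖ ≤ ∏ y ∈ s, ‖z - y‖ / ‖x - y‖ := by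
  choose ℓ hℓ_norm hℓ_apply using exists_dual_vector'' ℂ (E := E)
  have hxy : ∀ y ∈ s, ‖x - y‖ ≠ 0 := fun y hy ↦
    norm_ne_zero_iff.2 (sub_ne_zero.2 fun h ↦ hx (h ▸ hy))
  refine ⟨∏ y ∈ s, fun z ↦ ℓ (x - y) (z - y) / ‖x - y‖, ?_, ?_, ?_, fun z ↦ ?_⟩
  · refine Finset.prod_induction _ (Differentiable ℂ) (fun _ _ ↦ .mul)
      (differentiable_const 1) fun y _ ↦ ?_
    fun_prop
  · rw [Finset.prod_apply]
    exact Finset.prod_eq_one fun y hy ↦ by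
      rw [hℓ_apply]
      exact div_self (RCLike.ofReal_ne_zero.2 (hxy y hy))
  · intro y hy
    rw [Finset.prod_apply]
    exact Finset.prod_eq_zero hy (by simp)
  · rw [Finset.prod_apply, norm_prod]
    refine Finset.prod_le_prod (fun _ _ ↦ norm_nonneg _) fun y _ ↦ ?_
    rw [norm_div, Complex.norm_real, norm_norm]
    gcongr
    exact ((ℓ _).le_opNorm _).trans (mul_le_of_le_one_left (norm_nonneg _) (hℓ_norm _))

theorem exists_differentiable_peak (s : Finset E) {x : E} (hx : x ∉ s) (d : F) {ε : ℝ}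
    (hε : 0 < ε) :
    ∃ τ : E → F, Differentiable ℂ τ ∧ τ x = d ∧ (∀ y ∈ s, τ y = 0) ∧
      ∀ z, 2 * ‖z‖ < ‖x‖ → ‖τ z‖ ≤ ε := by
  obtain ⟨P, hP_diff, hPx, hPs, hP_le⟩ := exists_differentiable_eq_one_of_notMem s hx
  rcases eq_or_ne x 0 with rfl | hx0
  · refine ⟨fun z ↦ P z • d, hP_diff.smul_const d, by simp [hPx], fun y hy ↦ by simp [hPs y hy],
      fun z hz ↦ ?_⟩
    rw [norm_zero] at hz
    linarith [norm_nonneg z]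
  -- Damp `P` by a power of a linear function that is `1` at `x` and at most `1/2` for `2‖z‖ < ‖x‖`.
  obtain ⟨ℓ, hℓ_norm, hℓx⟩ := exists_dual_vector'' ℂ x
  set M := ∏ y ∈ s, (‖x‖ + ‖y‖) / ‖x - y‖
  have hM : 0 ≤ M := Finset.prod_nonneg fun _ _ ↦ by positivity
  obtain ⟨K, hK⟩ := exists_pow_lt_of_lt_one (show 0 < ε / (M * ‖d‖ + 1) by positivity)
    (show (1 / 2 : ℝ) < 1 by norm_num)
  refine ⟨fun z ↦ (P z * (ℓ z / ‖x‖) ^ K) • d, by fun_prop, ?_, fun y hy ↦ by simp [hPs y hy],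
    fun z hz ↦ ?_⟩
  · have : (‖x‖ : ℂ) ≠ 0 := by exact_mod_cast norm_ne_zero_iff.2 hx0
    simp [hPx, hℓx, this]
  have hPz : ‖P z‖ ≤ M := (hP_le z).trans <| Finset.prod_le_prod (fun _ _ ↦ by positivity)
    fun y _ ↦ by gcongr; exact (norm_sub_le z y).trans (by linarith [norm_nonneg z])
  have hℓz : ‖ℓ z / ‖x‖‖ ≤ 1 / 2 := by
    rw [norm_div, Complex.norm_real, norm_norm, div_le_iff₀ (norm_pos_iff.2 hx0)]
    linarith [((ℓ.le_opNorm z).trans (mul_le_of_le_one_left (norm_nonneg _) hℓ_norm))]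
  rw [lt_div_iff₀ (by positivity)] at hK
  calc ‖(P z * (ℓ z / ‖x‖) ^ K) • d‖ = ‖P z‖ * ‖ℓ z / ‖x‖‖ ^ K * ‖d‖ := by
        rw [norm_smul, norm_mul, norm_pow]
    _ ≤ M * (1 / 2) ^ K * ‖d‖ := by gcongr
    _ ≤ (1 / 2) ^ K * (M * ‖d‖ + 1) := by nlinarith [pow_pos (show (0 : ℝ) < 1 / 2 by norm_num) K]
    _ ≤ ε := hK.le

theorem exists_interpolating_series {b : ℕ → E} (hb : Function.Injective b) (w : ℕ → F) :
    ∃ T : ℕ → E → F, (∀ n, Differentiable ℂ (T n)) ∧ (∀ m n, m < n → T n (b m) = 0) ∧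
      (∀ n, ∑ k ∈ Finset.range (n + 1), T k (b n) = w n) ∧
      ∀ n z, 2 * ‖z‖ < ‖b n‖ → ‖T n z‖ ≤ (1 / 2) ^ n := by
  classical
  have hb_notMem : ∀ n, b n ∉ (Finset.range n).image b := fun n h ↦ by
    obtain ⟨m, hm, hmn⟩ := Finset.mem_image.1 h
    exact (Finset.mem_range.1 hm).ne (hb hmn)
  choose τ hτ_diff hτ_at hτ_zero hτ_small using fun n (d : F) ↦
    exists_differentiable_peak _ (hb_notMem n) d (ε := (1 / 2) ^ n) (by positivity)
  -- `S n` is the `n`-th partial sum; the `n`-th term corrects its error at `b n`.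
  let S : ℕ → E → F := fun n ↦ Nat.rec 0 (fun k Sk ↦ Sk + τ k (w k - Sk (b k))) n
  let T : ℕ → E → F := fun n ↦ τ n (w n - S n (b n))
  have hS : ∀ n, ∑ k ∈ Finset.range n, T k = S n := by
    intro n
    induction n with
    | zero => rfl
    | succ n ih => rw [Finset.sum_range_succ, ih]
  refine ⟨T, fun n ↦ hτ_diff _ _,
    fun m n hmn ↦ hτ_zero _ _ _ (Finset.mem_image_of_mem b (Finset.mem_range.2 hmn)),
    fun n ↦ ?_, fun n ↦ hτ_small n _⟩
  rw [← Finset.sum_apply, Finset.sum_range_succ, hS, Pi.add_apply]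
  simp only [T, hτ_at, add_sub_cancel]

theorem differentiable_tsum_of_eventually_norm_le [CompleteSpace F] {f : ℕ → E → F}
    (hf : ∀ n, Differentiable ℂ (f n)) {u : ℕ → ℝ} (hu : Summable u)
    (hfu : ∀ R, ∀ᶠ n in atTop, ∀ z ∈ closedBall (0 : E) R, ‖f n z‖ ≤ u n) :
    Differentiable ℂ fun z ↦ ∑' n, f n z := by
  have hsum : ∀ z, Summable (f · z) := fun z ↦ hu.of_norm_bounded_eventually <| by
    rw [Nat.cofinite_eq_atTop]
    exact (hfu ‖z‖).mono fun n hn ↦ hn z (by simp)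
  intro x
  obtain ⟨n₀, hn₀⟩ := eventually_atTop.1 (hfu (‖x‖ + 2))
  have hball : ∀ y ∈ ball x 1, ∀ z ∈ ball y 1, z ∈ closedBall (0 : E) (‖x‖ + 2) := by
    intro y hy z hz
    rw [mem_ball, dist_eq_norm] at hy hz
    rw [mem_closedBall_zero_iff]
    linarith [norm_le_norm_add_norm_sub' z y, norm_le_norm_add_norm_sub' y x]
  have hderiv : ∀ n, ∀ y ∈ ball x 1, ‖fderiv ℂ (f (n + n₀)) y‖ ≤ 2 * u (n + n₀) := by
    intro n y hy
    have hbound := hn₀ (n + n₀) (Nat.le_add_left _ _)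
    refine (Complex.norm_fderiv_le_div_of_mapsTo_ball (hf _).differentiableOn (fun z hz ↦ ?_)
      one_pos).trans_eq (div_one _)
    rw [mem_closedBall, dist_eq_norm, two_mul]
    exact (norm_sub_le _ _).trans (add_le_add (hbound z (hball y hy z hz))
      (hbound y (hball y hy y (mem_ball_self one_pos))))
  have htail := hasFDerivAt_tsum_of_isPreconnected (((summable_nat_add_iff n₀).2 hu).mul_left 2)
    isOpen_ball (convex_ball x 1).isPreconnected (fun n y _ ↦ (hf (n + n₀) y).hasFDerivAt)
    hderiv (mem_ball_self one_pos) ((summable_nat_add_iff n₀).2 (hsum x)) (mem_ball_self one_pos)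
  have hsplit : (fun z ↦ ∑' n, f n z) =
      fun z ↦ ∑ n ∈ Finset.range n₀, f n z + ∑' n, f (n + n₀) z :=
    funext fun z ↦ ((hsum z).sum_add_tsum_nat_add n₀).symm
  rw [hsplit]
  exact (Differentiable.fun_sum fun n _ ↦ hf n) x |>.add htail.differentiableAt

theorem exists_differentiable_interpolation [CompleteSpace F] {b : ℕ → E}
    (hb : Function.Injective b) (hb_tendsto : Tendsto (‖b ·‖) atTop atTop) (w : ℕ → F) :
    ∃ h : E → F, Differentiable ℂ h ∧ ∀ j, h (b j) = w j := by
  obtain ⟨T, hT_diff, hT_zero, hT_sum, hT_small⟩ := exists_interpolating_series hb w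
  refine ⟨fun z ↦ ∑' n, T n z, differentiable_tsum_of_eventually_norm_le hT_diff
    summable_geometric_two fun R ↦ ?_, fun j ↦ ?_⟩
  · filter_upwards [hb_tendsto.eventually_gt_atTop (2 * R)] with n hn z hz
    exact hT_small n z (by rw [mem_closedBall_zero_iff] at hz; linarith)
  · dsimp only
    rw [tsum_eq_sum (s := Finset.range (j + 1)) fun n hn ↦ hT_zero j n (by simpa using hn),
      hT_sum]

end Interpolation

section Transversal

variable {𝕜 E F : Type*} [NontriviallyNormedField 𝕜] [NormedAddCommGroup E] [NormedSpace 𝕜 E]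
  [NormedAddCommGroup F] [NormedSpace 𝕜 F] {W : Submodule 𝕜 E} {a : ℕ → E} {v : E}

theorem injective_comp_of_disjoint_ker (L : E →ₗ[𝕜] F) (hLW : Disjoint (LinearMap.ker L) W)
    (haW : ∀ j, a j - v ∈ W) (ha : Function.Injective a) : Function.Injective (L ∘ a) := by
  intro j k hjk
  have hW : a j - a k ∈ W := by simpa using W.sub_mem (haW j) (haW k)
  have hker : a j - a k ∈ LinearMap.ker L := by simpa [sub_eq_zero] using hjk
  exact ha (sub_eq_zero.1 (Submodule.disjoint_def.1 hLW _ hker hW))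

theorem tendsto_norm_map_of_disjoint_ker [CompleteSpace 𝕜] [FiniteDimensional 𝕜 W]
    (L : E →ₗ[𝕜] F) (hLW : Disjoint (LinearMap.ker L) W) (haW : ∀ j, a j - v ∈ W)
    (ha : Tendsto (‖a ·‖) atTop atTop) : Tendsto (fun j ↦ ‖L (a j)‖) atTop atTop := by
  obtain ⟨K, hK, hL⟩ := (L.domRestrict W).exists_antilipschitzWith <| by
    rw [LinearMap.ker_domRestrict, ← Submodule.disjoint_iff_comap_eq_bot]
    exact hLW.symm
  have hbound : ∀ j, ‖a j‖ ≤ K * (‖L (a j)‖ + ‖L v‖) + ‖v‖ := fun j ↦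
    calc ‖a j‖ ≤ ‖a j - v‖ + ‖v‖ := norm_le_norm_sub_add _ _
      _ ≤ K * ‖L (a j - v)‖ + ‖v‖ := by
        gcongr
        exact ZeroHomClass.bound_of_antilipschitz _ hL ⟨a j - v, haW j⟩
      _ ≤ K * (‖L (a j)‖ + ‖L v‖) + ‖v‖ := by
        rw [map_sub]
        gcongr
        exact norm_sub_le _ _
  exact (((tendsto_atTop_mono hbound ha).atTop_of_add_const _).atTop_of_const_mul₀
    (by exact_mod_cast hK)).atTop_of_add_const _

end Transversal

theorem Module.Basis.exists_notMem_of_ne_top {ι R M : Type*} [Semiring R] [AddCommMonoid M]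
    [Module R M] (b : Module.Basis ι R M) {W : Submodule R M} (hW : W ≠ ⊤) : ∃ i, b i ∉ W := by
  by_contra! h
  exact hW (eq_top_iff.2 (b.span_eq ▸ Submodule.span_le.2 (Set.range_subset_iff.2 h)))

section Automorphisms

variable {N : ℕ}

theorem IsAutomorphism.comp {Φ Ψ : (Fin N → ℂ) → Fin N → ℂ} (hΨ : IsAutomorphism Ψ)
    (hΦ : IsAutomorphism Φ) : IsAutomorphism (Ψ ∘ Φ) := by
  obtain ⟨hΨ_diff, Ψ', hΨ'_diff, hΨ_left, hΨ_right⟩ := hΨ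
  obtain ⟨hΦ_diff, Φ', hΦ'_diff, hΦ_left, hΦ_right⟩ := hΦ
  exact ⟨hΨ_diff.comp hΦ_diff, Φ' ∘ Ψ', hΦ'_diff.comp hΨ'_diff, fun z ↦ by simp [hΨ_left, hΦ_left],
    fun w ↦ by simp [hΦ_right, hΨ_right]⟩

theorem ContinuousLinearEquiv.isAutomorphism (L : (Fin N → ℂ) ≃L[ℂ] Fin N → ℂ) :
    IsAutomorphism L :=
  ⟨L.differentiable, L.symm, L.symm.differentiable, L.symm_apply_apply, L.apply_symm_apply⟩

/-- A shear `z ↦ z + g (q z)` along directions that `q` does not see is inverted by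
`z ↦ z - g (q z)`. -/
theorem isAutomorphism_shear {E : Type*} [NormedAddCommGroup E] [NormedSpace ℂ E]
    {q : (Fin N → ℂ) → E} {g : E → Fin N → ℂ} (hq : Differentiable ℂ q) (hg : Differentiable ℂ g)
    (hqg : ∀ z y, q (z + g y) = q z) : IsAutomorphism fun z ↦ z + g (q z) := by
  have hq_sub : ∀ z, q (z - g (q z)) = q z := fun z ↦ by
    simpa using (hqg (z - g (q z)) (q z)).symm
  refine ⟨differentiable_id.add (hg.comp hq), fun z ↦ z - g (q z),
    differentiable_id.sub (hg.comp hq), fun z ↦ ?_, fun z ↦ ?_⟩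
  · simp only [hqg, add_sub_cancel_right]
  · simp only [hq_sub, sub_add_cancel]

end Automorphisms

theorem DiscreteSeq.tendsto_norm_atTop {N : ℕ} {a : ℕ → Fin N → ℂ} (ha : DiscreteSeq a) :
    Tendsto (‖a ·‖) atTop atTop := by
  refine tendsto_atTop.2 fun R ↦ ?_
  rw [← Nat.cofinite_eq_atTop]
  filter_upwards [(ha.2 _ (isCompact_closedBall 0 R)).eventually_cofinite_notMem] with j hj
  rw [mem_closedBall_zero_iff, not_le] at hj
  exact hj.le

theorem exists_isAutomorphism_apply_eq_smul_single {N : ℕ} {i₀ : Fin N}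
    {W : Submodule ℂ (Fin N → ℂ)} (hW : Pi.single i₀ 1 ∉ W) {a : ℕ → Fin N → ℂ}
    {v : Fin N → ℂ} (haW : ∀ j, a j - v ∈ W) (ha_inj : Function.Injective a)
    (ha : Tendsto (‖a ·‖) atTop atTop) :
    ∃ Φ, IsAutomorphism Φ ∧ ∀ j : ℕ, Φ (a j) = (j : ℂ) • Pi.single i₀ 1 := by
  set e : Fin N → ℂ := Pi.single i₀ 1
  let π : (Fin N → ℂ) →L[ℂ] Fin N → ℂ :=
    ContinuousLinearMap.id ℂ _ - (ContinuousLinearMap.proj i₀).smulRight e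
  have hπ : ∀ z, π z = z - z i₀ • e := fun z ↦ rfl
  have hπ_apply_i₀ : ∀ z, π z i₀ = 0 := fun z ↦ by simp [hπ, e]
  have hπ_add : ∀ z (t : ℂ), π (z + t • e) = π z := fun z t ↦ by
    simp only [hπ, Pi.add_apply, Pi.smul_apply, e, Pi.single_eq_same, smul_eq_mul, mul_one,
      add_smul]
    abel
  have hπ_idem : ∀ z, π (π z) = π z := fun z ↦ by simp [hπ (π z), hπ_apply_i₀]
  have hker : Disjoint (LinearMap.ker (π : (Fin N → ℂ) →ₗ[ℂ] Fin N → ℂ)) W :=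
    (Submodule.disjoint_span_singleton.2 fun he ↦ absurd he hW).symm.mono_left
      fun z hz ↦ Submodule.mem_span_singleton.2 ⟨z i₀, (sub_eq_zero.1 hz).symm⟩
  obtain ⟨f, hf_diff, hf⟩ := exists_differentiable_interpolation
    (injective_comp_of_disjoint_ker _ hker haW ha_inj)
    (tendsto_norm_map_of_disjoint_ker _ hker haW ha) fun j ↦ (j : ℂ) - a j i₀
  obtain ⟨g, hg_diff, hg⟩ := exists_differentiable_interpolation (b := ((↑) : ℕ → ℂ))
    Nat.cast_injective (by simpa using tendsto_natCast_atTop_atTop) fun j ↦ π (a j)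
  have hΦ₁ := isAutomorphism_shear π.differentiable (hf_diff.smul_const e)
    fun z y ↦ hπ_add z (f y)
  have hΦ₂ := isAutomorphism_shear (differentiable_apply i₀) (π.differentiable.comp hg_diff).neg
    fun z y ↦ by simp [hπ_apply_i₀]
  refine ⟨_, hΦ₂.comp hΦ₁, fun j ↦ ?_⟩
  have h₁ : a j + f (π (a j)) • e = π (a j) + (j : ℂ) • e := by
    rw [show f (π (a j)) = j - a j i₀ from hf j, hπ, sub_smul]
    abel
  change (a j + f (π (a j)) • e) + -π (g ((a j + f (π (a j)) • e) i₀)) = _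
  rw [h₁]
  simp [hπ_apply_i₀, e, hg, hπ_idem]

theorem stmt_10_general {N : ℕ}
    (a : ℕ → (Fin N → ℂ)) (ha : DiscreteSeq a)
    (v : Fin N → ℂ) (W : Submodule ℂ (Fin N → ℂ)) (hW : W ≠ ⊤)
    (haW : ∀ j, a j - v ∈ W) :
    Tame a := by
  obtain ⟨i₀, hi₀⟩ := (Pi.basisFun ℂ (Fin N)).exists_notMem_of_ne_top hW
  rw [Pi.basisFun_apply] at hi₀
  obtain ⟨Φ, hΦ, hΦa⟩ :=
    exists_isAutomorphism_apply_eq_smul_single hi₀ haW ha.1 ha.tendsto_norm_atTop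
  let σ := (LinearEquiv.funCongrLeft ℂ ℂ (Equiv.swap i₀ ⟨0, i₀.pos⟩)).toContinuousLinearEquiv
  refine ⟨σ ∘ Φ, σ.isAutomorphism.comp hΦ, fun j ↦ funext fun i ↦ ?_⟩
  simp [σ, hΦa, Pi.single_apply, Equiv.swap_apply_eq_iff, Fin.ext_iff]

/-- A discrete sequence contained in a proper affine complex subspace of ℂ^N
is tame. -/
theorem stmt_10 {N : ℕ} (hN : 1 < N)
    (a : ℕ → (Fin N → ℂ)) (ha : DiscreteSeq a)
    (v : Fin N → ℂ) (W : Submodule ℂ (Fin N → ℂ)) (hW : W ≠ ⊤)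
    (haW : ∀ j, a j - v ∈ W) :
    Tame a :=
  stmt_10_general a ha v W hW haW
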